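/- arXiv:math/0203029 — 7 statements merged into one kernel-verified Lean document; each statement's English description precedes it below -/
import Mathlib

section
/- Let μ be non-increasing, nonnegative, not integrable, and S(x) = ∫₀ˣ μ. Then liminf_{x→∞} x·μ(x)/S(x) = 0 if and only if 1 is a limit point as x→∞ of S(2x)/S(x). -/
/-!
For `u > 0`, monotonicity of `μ` squeezes the increment `S (2u) - S u = ∫_u^{2u} μ` between
`u μ(2u)` and `u μ(u)`. Dividing by `S u` (and using `S u ≤ S (2u)`) gives
`1 ≤ S (2u) / S u ≤ 1 + F u` and `F (2u) ≤ 2 (S (2u) / S u - 1)` for `F x = x μ(x) / S x`.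
So along any sequence, `F (uₙ) → 0` forces `S (2uₙ) / S uₙ → 1`, and conversely
`S (2uₙ) / S uₙ → 1` forces `F (2uₙ) → 0`. Since `0 ≤ F ≤ 1`, `liminf F = 0` means
exactly that `F` tends to `0` along some sequence going to infinity.
-/

open MeasureTheory Filter Topology

theorem liminf_eq_iff_exists_seq_tendsto {α β : Type*} [ConditionallyCompleteLinearOrder α]
    [TopologicalSpace α] [OrderTopology α] [FirstCountableTopology α]
    {f : Filter β} [NeBot f] [IsCountablyGenerated f] {F : β → α} {a : α}
    (hge : ∀ᶠ x in f, a ≤ F x) (hbdd : IsBoundedUnder (· ≤ ·) f F) :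
    liminf F f = a ↔
      ∃ u : ℕ → β, Tendsto u atTop f ∧ Tendsto (F ∘ u) atTop (𝓝 a) := by
  have hcob : IsCoboundedUnder (· ≥ ·) f F := hbdd.isCoboundedUnder_ge
  have hbdd' : IsBoundedUnder (· ≥ ·) f F := isBoundedUnder_of_eventually_ge hge
  constructor
  · rintro rfl
    obtain ⟨u, hFu, hu⟩ := exists_seq_tendsto_liminf hcob hbdd'
    exact ⟨u, hu, hFu⟩
  · rintro ⟨u, hu, hFu⟩
    have hclus : MapClusterPt a f F := hFu.mapClusterPt.of_comp hu
    exact le_antisymm ((isLeast_mapClusterPt_liminf hcob hbdd').2 hclus)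
      (le_liminf_of_le hcob hge)

theorem intervalIntegrable_of_antitoneOn_Ici {μ : ℝ → ℝ} (hmono : AntitoneOn μ (Set.Ici 0))
    {a b : ℝ} (ha : 0 ≤ a) (hb : 0 ≤ b) : IntervalIntegrable μ volume a b :=
  (hmono.mono fun _ hx => le_trans (le_inf ha hb) hx.1).intervalIntegrable

theorem mul_le_integral_le_mul_of_antitoneOn_Ici {μ : ℝ → ℝ}
    (hmono : AntitoneOn μ (Set.Ici 0)) {a b : ℝ} (ha : 0 ≤ a) (hab : a ≤ b) :
    (b - a) * μ b ≤ ∫ y in a..b, μ y ∧ ∫ y in a..b, μ y ≤ (b - a) * μ a := by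
  have hb : 0 ≤ b := ha.trans hab
  have hint := intervalIntegrable_of_antitoneOn_Ici hmono ha hb
  constructor
  · simpa [mul_comm] using intervalIntegral.integral_mono_on hab intervalIntegrable_const hint
      fun y hy => hmono (ha.trans hy.1) hb hy.2
  · simpa [mul_comm] using intervalIntegral.integral_mono_on hab hint intervalIntegrable_const
      fun y hy => hmono ha (ha.trans hy.1) hy.1

section Primitive

variable {μ S : ℝ → ℝ} (hmono : AntitoneOn μ (Set.Ici 0))
  (hS : ∀ x, S x = ∫ y in (0:ℝ)..x, μ y)
include hmono hS

theorem mul_le_primitive_of_antitoneOn {x : ℝ} (hx : 0 ≤ x) : x * μ x ≤ S x := by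
  simpa [hS] using (mul_le_integral_le_mul_of_antitoneOn_Ici hmono le_rfl hx).1

theorem primitive_two_mul_sub_bounds {u : ℝ} (hu : 0 ≤ u) :
    u * μ (2 * u) ≤ S (2 * u) - S u ∧ S (2 * u) - S u ≤ u * μ u := by
  have hincr : S (2 * u) - S u = ∫ y in u..2 * u, μ y := by
    rw [hS, hS]
    exact intervalIntegral.integral_interval_sub_left
      (intervalIntegrable_of_antitoneOn_Ici hmono le_rfl (by linarith))
      (intervalIntegrable_of_antitoneOn_Ici hmono le_rfl hu)
  have h := mul_le_integral_le_mul_of_antitoneOn_Ici hmono hu (by linarith : u ≤ 2 * u)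
  rw [show 2 * u - u = u by ring] at h
  rw [hincr]
  exact h

variable (hnn : ∀ x ≥ 0, 0 ≤ μ x)
include hnn

theorem one_le_primitive_ratio {u : ℝ} (hu : 0 ≤ u) (hSu : 0 < S u) :
    1 ≤ S (2 * u) / S u := by
  have h := (primitive_two_mul_sub_bounds hmono hS hu).1
  have := mul_nonneg hu (hnn (2 * u) (by linarith))
  rw [one_le_div hSu]
  linarith

omit hnn in
theorem primitive_ratio_le {u : ℝ} (hu : 0 ≤ u) (hSu : 0 < S u) :
    S (2 * u) / S u ≤ 1 + u * μ u / S u := by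
  have h := (primitive_two_mul_sub_bounds hmono hS hu).2
  rw [div_le_iff₀ hSu, add_mul, one_mul, div_mul_cancel₀ _ hSu.ne']
  linarith

theorem two_mul_div_primitive_le {u : ℝ} (hu : 0 ≤ u) (hSu : 0 < S u) :
    2 * u * μ (2 * u) / S (2 * u) ≤ 2 * (S (2 * u) / S u - 1) := by
  have h := (primitive_two_mul_sub_bounds hmono hS hu).1
  have hnum : 0 ≤ 2 * u * μ (2 * u) := mul_nonneg (by linarith) (hnn _ (by linarith))
  have hSle : S u ≤ S (2 * u) := by
    have := one_le_primitive_ratio hmono hS hnn hu hSu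
    rwa [one_le_div hSu] at this
  calc 2 * u * μ (2 * u) / S (2 * u) ≤ 2 * u * μ (2 * u) / S u :=
        div_le_div_of_nonneg_left hnum hSu hSle
    _ ≤ 2 * (S (2 * u) - S u) / S u := div_le_div_of_nonneg_right (by linarith) hSu.le
    _ = 2 * (S (2 * u) / S u - 1) := by field_simp

end Primitive

theorem stmt_2_general (μ : ℝ → ℝ) (hnn : ∀ x ≥ 0, 0 ≤ μ x)
    (hmono : AntitoneOn μ (Set.Ici 0))
    (S : ℝ → ℝ) (hS : ∀ x, S x = ∫ y in (0:ℝ)..x, μ y)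
    (hSpos : ∀ x > 0, 0 < S x) :
    Filter.liminf (fun x => x * μ x / S x) Filter.atTop = 0 ↔
      ∃ u : ℕ → ℝ, Filter.Tendsto u Filter.atTop Filter.atTop ∧
        Filter.Tendsto (fun n => S (2 * u n) / S (u n)) Filter.atTop (nhds 1) := by
  have hF0 : ∀ᶠ x in atTop, 0 ≤ x * μ x / S x := by
    filter_upwards [eventually_gt_atTop 0] with x hx
    exact div_nonneg (mul_nonneg hx.le (hnn x hx.le)) (hSpos x hx).le
  have hF1 : ∀ᶠ x in atTop, x * μ x / S x ≤ 1 := by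
    filter_upwards [eventually_gt_atTop 0] with x hx
    exact div_le_one_of_le₀ (mul_le_primitive_of_antitoneOn hmono hS hx.le) (hSpos x hx).le
  rw [liminf_eq_iff_exists_seq_tendsto hF0 (isBoundedUnder_of_eventually_le hF1)]
  constructor
  · rintro ⟨u, hu, hFu⟩
    refine ⟨u, hu, tendsto_of_tendsto_of_tendsto_of_le_of_le' tendsto_const_nhds
      (by simpa using hFu.const_add 1) ?_ ?_⟩ <;>
    filter_upwards [hu.eventually_gt_atTop 0] with n hn
    · exact one_le_primitive_ratio hmono hS hnn hn.le (hSpos _ hn)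
    · exact primitive_ratio_le hmono hS hn.le (hSpos _ hn)
  · rintro ⟨u, hu, hratio⟩
    refine ⟨fun n => 2 * u n, hu.const_mul_atTop two_pos, ?_⟩
    refine tendsto_of_tendsto_of_tendsto_of_le_of_le' tendsto_const_nhds
      (by simpa using (hratio.sub_const 1).const_mul 2) ?_ ?_ <;>
    filter_upwards [hu.eventually_gt_atTop 0] with n hn
    · exact div_nonneg (mul_nonneg (by linarith) (hnn _ (by linarith))) (hSpos _ (by linarith)).le
    · exact two_mul_div_primitive_le hmono hS hnn hn.le (hSpos _ hn)

theorem stmt_2 (μ : ℝ → ℝ) (hnn : ∀ x ≥ 0, 0 ≤ μ x)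
    (hmono : AntitoneOn μ (Set.Ici 0))
    (hrc : ∀ x ≥ (0:ℝ), ContinuousWithinAt μ (Set.Ici x) x)
    (hnotint : ¬ IntegrableOn μ (Set.Ici 0))
    (S : ℝ → ℝ) (hS : ∀ x, S x = ∫ y in (0:ℝ)..x, μ y)
    (hSpos : ∀ x > 0, 0 < S x) :
    Filter.liminf (fun x => x * μ x / S x) Filter.atTop = 0 ↔
      ∃ u : ℕ → ℝ, Filter.Tendsto u Filter.atTop Filter.atTop ∧
        Filter.Tendsto (fun n => S (2 * u n) / S (u n)) Filter.atTop (nhds 1) :=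
  stmt_2_general μ hnn hmono S hS hSpos
end

section
/- Let g : ℝ → ℝ be non-decreasing. Then the limit as h → ∞ of liminf_{t→∞} (g(t+h) − g(t))/h exists and equals sup_{h>0} liminf_{t→∞} (g(t+h) − g(t))/h. -/
/-!
If `g` is monotone and `g (t + h₀) - g t ≥ c h₀` for all large `t`, then chaining `⌊h / h₀⌋` such
steps and using monotonicity on the remainder gives `g (t + h) - g t ≥ (h - h₀) c` for all large
`t` and all `h ≥ 0`. Hence the liminf slope at scale `h` is at least `(1 - h₀ / h) c`, which tends
to `c` as `h → ∞`; so every value of the liminf slope is a lower bound for its liminf as `h → ∞`,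
and the supremum over `h > 0` is an upper bound for it trivially.
-/

open Filter Topology

noncomputable def liminfSlope (g : ℝ → ℝ) (h : ℝ) : EReal :=
  liminf (fun t : ℝ => (((g (t + h) - g t) / h : ℝ) : EReal)) atTop

section

variable {g : ℝ → ℝ} {c h₀ T : ℝ}

lemma nat_mul_le_sub_of_forall_ge (hh₀ : 0 ≤ h₀)
    (hstep : ∀ t, T ≤ t → c * h₀ ≤ g (t + h₀) - g t) (n : ℕ) {t : ℝ} (ht : T ≤ t) :
    n * (c * h₀) ≤ g (t + n * h₀) - g t := by
  induction n with
  | zero => simp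
  | succ n ih =>
    have hT : T ≤ t + n * h₀ := le_add_of_le_of_nonneg ht (by positivity)
    have := hstep _ hT
    push_cast
    rw [add_one_mul, add_one_mul, ← add_assoc]
    linarith

lemma Monotone.mul_sub_le_sub_of_forall_ge (hg : Monotone g) (hc : 0 ≤ c) (hh₀ : 0 < h₀)
    (hstep : ∀ t, T ≤ t → c * h₀ ≤ g (t + h₀) - g t) {t h : ℝ} (ht : T ≤ t) (hh : 0 ≤ h) :
    (h - h₀) * c ≤ g (t + h) - g t := by
  set n := ⌊h / h₀⌋₊
  have hn_le : n * h₀ ≤ h := (le_div_iff₀ hh₀).1 (Nat.floor_le (div_nonneg hh hh₀.le))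
  have hlt_n : h < (n + 1) * h₀ := (div_lt_iff₀ hh₀).1 (Nat.lt_floor_add_one _)
  have hsteps := nat_mul_le_sub_of_forall_ge hh₀.le hstep n ht
  have hmono : g (t + n * h₀) ≤ g (t + h) := hg (by linarith)
  calc (h - h₀) * c ≤ n * h₀ * c := mul_le_mul_of_nonneg_right (by linarith) hc
    _ = n * (c * h₀) := by ring
    _ ≤ g (t + h) - g t := by linarith

lemma liminfSlope_nonneg (hg : Monotone g) {h : ℝ} (hh : 0 < h) : 0 ≤ liminfSlope g h := by
  refine le_liminf_of_le (by isBoundedDefault) (Eventually.of_forall fun t => ?_)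
  have : g t ≤ g (t + h) := hg (le_add_of_nonneg_right hh.le)
  exact EReal.coe_nonneg.2 (div_nonneg (sub_nonneg.2 this) hh.le)

lemma le_liminfSlope_of_lt (hg : Monotone g) (hc : 0 ≤ c) (hh₀ : 0 < h₀)
    (hlt : (c : EReal) < liminfSlope g h₀) {h : ℝ} (hh : 0 < h) :
    (((h - h₀) * c / h : ℝ) : EReal) ≤ liminfSlope g h := by
  obtain ⟨T, hstep⟩ : ∃ T, ∀ t, T ≤ t → c * h₀ ≤ g (t + h₀) - g t := by
    refine eventually_atTop.1 ?_
    filter_upwards [eventually_lt_of_lt_liminf hlt (by isBoundedDefault)] with t ht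
    exact ((lt_div_iff₀ hh₀).1 (EReal.coe_lt_coe_iff.1 ht)).le
  refine le_liminf_of_le (by isBoundedDefault) ?_
  filter_upwards [eventually_ge_atTop T] with t ht
  exact EReal.coe_le_coe_iff.2 <| div_le_div_of_nonneg_right
    (hg.mul_sub_le_sub_of_forall_ge hc hh₀ hstep ht hh.le) hh.le

lemma liminfSlope_le_liminf (hg : Monotone g) (hh₀ : 0 < h₀) :
    liminfSlope g h₀ ≤ liminf (liminfSlope g) atTop := by
  have hnonneg : 0 ≤ liminf (liminfSlope g) atTop :=
    le_liminf_of_le (by isBoundedDefault)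
      (eventually_gt_atTop 0 |>.mono fun _ hh => liminfSlope_nonneg hg hh)
  refine EReal.ge_of_forall_gt_iff_ge.1 fun c hlt => ?_
  rcases lt_or_ge c 0 with hc | hc
  · exact (EReal.coe_lt_coe_iff.2 hc).le.trans hnonneg
  have hbound : Tendsto (fun h : ℝ => (h - h₀) * c / h) atTop (𝓝 c) := by
    have : Tendsto (fun h : ℝ => c - h₀ * c / h) atTop (𝓝 (c - 0)) :=
      tendsto_const_nhds.sub (tendsto_const_nhds.div_atTop tendsto_id)
    rw [sub_zero] at this
    refine this.congr' ?_
    filter_upwards [eventually_gt_atTop 0] with h hh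
    field_simp
  calc (c : EReal) = liminf (fun h : ℝ => (((h - h₀) * c / h : ℝ) : EReal)) atTop :=
        ((continuous_coe_real_ereal.tendsto c).comp hbound).liminf_eq.symm
    _ ≤ liminf (liminfSlope g) atTop := by
        refine liminf_le_liminf ?_
        filter_upwards [eventually_gt_atTop 0] with h hh
        exact le_liminfSlope_of_lt hg hc hh₀ hlt hh

end

theorem stmt_5 (g : ℝ → ℝ) (hg : Monotone g) :
    Filter.Tendsto
      (fun h : ℝ => Filter.liminf (fun t : ℝ => (((g (t + h) - g t) / h : ℝ) : EReal)) Filter.atTop)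
      Filter.atTop
      (nhds (⨆ h : {h : ℝ // 0 < h},
        Filter.liminf (fun t : ℝ => (((g (t + h.1) - g t) / h.1 : ℝ) : EReal)) Filter.atTop)) := by
  change Tendsto (liminfSlope g) atTop (𝓝 (⨆ h : {h : ℝ // 0 < h}, liminfSlope g h.1))
  refine tendsto_of_le_liminf_of_limsup_le ?_ ?_
  · exact iSup_le fun h => liminfSlope_le_liminf hg h.2
  · refine limsup_le_of_le (by isBoundedDefault) ?_
    filter_upwards [eventually_gt_atTop 0] with h hh
    exact le_iSup (fun h : {h : ℝ // 0 < h} => liminfSlope g h.1) ⟨h, hh⟩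
end

section
/- Let g : ℝ → ℝ be non-decreasing and define α := inf_{h>0} limsup_{t→∞} (g(t+h) − g(t))/h and β := sup_{h>0} liminf_{t→∞} (g(t+h) − g(t))/h. Then α ≥ limsup_{t→∞} g(t)/t ≥ liminf_{t→∞} g(t)/t ≥ β. -/
/-! If eventually `g (t + h) ≤ g t + c * h`, iterating this over the `⌊(t - T) / h⌋` steps from a
threshold `T` to `t` and using monotonicity between grid points gives `g t ≤ c * t + K`, hence
`limsup g t / t ≤ c`; letting `c` decrease to the limsup of the slopes and then taking the infimum
over `h` gives the first inequality. The last one is the mirror image, and the middle one is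
`liminf ≤ limsup`. -/

open Filter

lemma exists_nat_mem_Ico_add_mul {T t h : ℝ} (hh : 0 < h) (ht : T ≤ t) :
    ∃ n : ℕ, T + n * h ≤ t ∧ t < T + (n + 1) * h := by
  have hq : 0 ≤ (t - T) / h := div_nonneg (sub_nonneg.2 ht) hh.le
  refine ⟨⌊(t - T) / h⌋₊, ?_, ?_⟩
  · have := (le_div_iff₀ hh).1 (Nat.floor_le hq)
    linarith
  · have := (div_lt_iff₀ hh).1 (Nat.lt_floor_add_one ((t - T) / h))
    linarith

lemma le_add_nat_mul_of_forall_le_add {g : ℝ → ℝ} {T h d : ℝ} (hh : 0 ≤ h)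
    (hT : ∀ t ≥ T, g (t + h) ≤ g t + d) (n : ℕ) : g (T + n * h) ≤ g T + n * d := by
  induction n with
  | zero => simp
  | succ n ih =>
    have hstep := hT (T + n * h) (le_add_of_nonneg_right (by positivity))
    push_cast
    rw [add_one_mul, ← add_assoc]
    linarith

lemma add_nat_mul_le_of_forall_add_le {g : ℝ → ℝ} {T h d : ℝ} (hh : 0 ≤ h)
    (hT : ∀ t ≥ T, g t + d ≤ g (t + h)) (n : ℕ) : g T + n * d ≤ g (T + n * h) := by
  have := le_add_nat_mul_of_forall_le_add (g := -g) (d := -d) hh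
    (fun t ht => by simp only [Pi.neg_apply]; linarith [hT t ht]) n
  simp only [Pi.neg_apply] at this
  linarith

namespace Monotone

variable {g : ℝ → ℝ} {h c : ℝ}

lemma exists_le_linear_of_eventually_le_add (hg : Monotone g) (hh : 0 < h)
    (hev : ∀ᶠ t in atTop, g (t + h) ≤ g t + c * h) :
    ∃ K, ∀ᶠ t in atTop, g t ≤ c * t + K := by
  obtain ⟨T, hT⟩ := eventually_atTop.1 hev
  have hc : 0 ≤ c := by
    have := (hT T le_rfl).trans' (hg (le_add_of_nonneg_right hh.le))
    nlinarith
  refine ⟨g T - c * T + c * h, eventually_atTop.2 ⟨T, fun t ht => ?_⟩⟩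
  obtain ⟨n, hn, hlt⟩ := exists_nat_mem_Ico_add_mul hh ht
  calc g t ≤ g (T + (n + 1 : ℕ) * h) := hg (by push_cast; exact hlt.le)
    _ ≤ g T + (n + 1 : ℕ) * (c * h) := le_add_nat_mul_of_forall_le_add hh.le hT _
    _ ≤ c * t + (g T - c * T + c * h) := by push_cast; nlinarith

lemma exists_linear_le_of_eventually_add_le (hg : Monotone g) (hh : 0 < h)
    (hev : ∀ᶠ t in atTop, g t + c * h ≤ g (t + h)) :
    ∃ K, ∀ᶠ t in atTop, c * t + K ≤ g t := by
  obtain ⟨T, hT⟩ := eventually_atTop.1 hev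
  rcases le_total c 0 with hc | hc
  · refine ⟨g T - c * T, eventually_atTop.2 ⟨T, fun t ht => ?_⟩⟩
    have := hg ht
    nlinarith
  refine ⟨g T - c * T - c * h, eventually_atTop.2 ⟨T, fun t ht => ?_⟩⟩
  obtain ⟨n, hn, hlt⟩ := exists_nat_mem_Ico_add_mul hh ht
  calc c * t + (g T - c * T - c * h) ≤ g T + n * (c * h) := by nlinarith
    _ ≤ g (T + n * h) := add_nat_mul_le_of_forall_add_le hh.le hT n
    _ ≤ g t := hg hn

end Monotone

lemma tendsto_coe_const_add_div_atTop (c K : ℝ) :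
    Tendsto (fun t : ℝ => ((c + K / t : ℝ) : EReal)) atTop (nhds (c : EReal)) := by
  rw [EReal.tendsto_coe]
  simpa using (tendsto_const_nhds (x := c)).add (tendsto_const_nhds.div_atTop tendsto_id)

section EReal

variable {g : ℝ → ℝ} {c K h : ℝ}

lemma limsup_div_le_of_eventually_le_linear (hev : ∀ᶠ t in atTop, g t ≤ c * t + K) :
    limsup (fun t : ℝ => ((g t / t : ℝ) : EReal)) atTop ≤ c := by
  refine (limsup_le_limsup ?_).trans_eq (tendsto_coe_const_add_div_atTop c K).limsup_eq
  filter_upwards [hev, eventually_gt_atTop 0] with t ht htpos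
  rw [EReal.coe_le_coe_iff, div_le_iff₀ htpos, add_mul, div_mul_cancel₀ _ htpos.ne']
  linarith

lemma le_liminf_div_of_eventually_linear_le (hev : ∀ᶠ t in atTop, c * t + K ≤ g t) :
    (c : EReal) ≤ liminf (fun t : ℝ => ((g t / t : ℝ) : EReal)) atTop := by
  refine (tendsto_coe_const_add_div_atTop c K).liminf_eq.symm.trans_le (liminf_le_liminf ?_)
  filter_upwards [hev, eventually_gt_atTop 0] with t ht htpos
  rw [EReal.coe_le_coe_iff, le_div_iff₀ htpos, add_mul, div_mul_cancel₀ _ htpos.ne']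
  linarith

lemma Monotone.limsup_div_le_limsup_slope (hg : Monotone g) (hh : 0 < h) :
    limsup (fun t : ℝ => ((g t / t : ℝ) : EReal)) atTop ≤
      limsup (fun t : ℝ => (((g (t + h) - g t) / h : ℝ) : EReal)) atTop := by
  refine le_of_forall_gt_imp_ge_of_dense fun x hx => ?_
  obtain ⟨c, hc, hcx⟩ := EReal.exists_between_coe_real hx
  have hev : ∀ᶠ t in atTop, g (t + h) ≤ g t + c * h :=
    (eventually_lt_of_limsup_lt hc).mono fun t ht => by
      linarith [(div_lt_iff₀ hh).1 (EReal.coe_lt_coe_iff.1 ht)]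
  obtain ⟨K, hK⟩ := hg.exists_le_linear_of_eventually_le_add hh hev
  exact (limsup_div_le_of_eventually_le_linear hK).trans hcx.le

lemma Monotone.liminf_slope_le_liminf_div (hg : Monotone g) (hh : 0 < h) :
    liminf (fun t : ℝ => (((g (t + h) - g t) / h : ℝ) : EReal)) atTop ≤
      liminf (fun t : ℝ => ((g t / t : ℝ) : EReal)) atTop := by
  refine le_of_forall_lt_imp_le_of_dense fun x hx => ?_
  obtain ⟨c, hxc, hc⟩ := EReal.exists_between_coe_real hx
  have hev : ∀ᶠ t in atTop, g t + c * h ≤ g (t + h) :=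
    (eventually_lt_of_lt_liminf hc).mono fun t ht => by
      linarith [(lt_div_iff₀ hh).1 (EReal.coe_lt_coe_iff.1 ht)]
  obtain ⟨K, hK⟩ := hg.exists_linear_le_of_eventually_add_le hh hev
  exact hxc.le.trans (le_liminf_div_of_eventually_linear_le hK)

end EReal

theorem stmt_6 (g : ℝ → ℝ) (hg : Monotone g)
    (α β : EReal)
    (hα : α = ⨅ h : {h : ℝ // 0 < h},
      Filter.limsup (fun t : ℝ => (((g (t + h.1) - g t) / h.1 : ℝ) : EReal)) Filter.atTop)
    (hβ : β = ⨆ h : {h : ℝ // 0 < h},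
      Filter.liminf (fun t : ℝ => (((g (t + h.1) - g t) / h.1 : ℝ) : EReal)) Filter.atTop) :
    Filter.limsup (fun t : ℝ => ((g t / t : ℝ) : EReal)) Filter.atTop ≤ α ∧
    Filter.liminf (fun t : ℝ => ((g t / t : ℝ) : EReal)) Filter.atTop ≤
      Filter.limsup (fun t : ℝ => ((g t / t : ℝ) : EReal)) Filter.atTop ∧
    β ≤ Filter.liminf (fun t : ℝ => ((g t / t : ℝ) : EReal)) Filter.atTop := by
  subst hα hβ
  exact ⟨le_iInf fun h => hg.limsup_div_le_limsup_slope h.2, liminf_le_limsup,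
    iSup_le fun h => hg.liminf_slope_le_liminf_div h.2⟩
end

section
/- Let μ : [0,∞) → (0,∞) be non-increasing with μ ∉ L¹, and S(x) = ∫₀ˣ μ. Suppose there exists λ > 1 with λ · liminf_{t→∞} μ(λt)/μ(t) > 1. Then liminf_{x→∞} S(λx)/S(x) ≥ λ · liminf_{x→∞} μ(λx)/μ(x) > 1. -/
/-!
Write `S(x) = ∫₀ˣ μ`. The substitution `y = λt` gives `∫_{λa}^{λb} μ = λ ∫_a^b μ(λt) dt`.
Since `μ(λt) ≤ μ(t)`, this yields `S(λx) ≤ λ S(x)`, which keeps the ratio bounded so that its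
`liminf` is not the junk value of `Filter.liminf`; and if `μ(λt) ≥ c μ(t)` for `t ≥ T`,
it yields `S(λx) ≥ λc (S(x) - S(T))`. As `μ ∉ L¹`, `S(x) → ∞`, so the constant `λc S(T)` is
negligible and `liminf S(λx)/S(x) ≥ λc` for every `c < liminf μ(λt)/μ(t)`.
-/

open MeasureTheory Filter Set intervalIntegral Topology

theorem Filter.le_liminf_div_of_le_mul_sub {α : Type*} {l : Filter α} [l.NeBot] {f g : α → ℝ}
    {a b K : ℝ} (hg : Tendsto g l atTop) (hle : ∀ᶠ x in l, f x ≤ b * g x)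
    (hge : ∀ᶠ x in l, a * g x - K ≤ f x) :
    a ≤ liminf (fun x => f x / g x) l := by
  have hlim : Tendsto (fun x => a - K / g x) l (𝓝 a) := by
    simpa using tendsto_const_nhds.sub (hg.const_div_atTop K)
  have hpos := hg.eventually_gt_atTop 0
  have hbdd : ∀ᶠ x in l, f x / g x ≤ b := by
    filter_upwards [hle, hpos] with x hx hgx
    rwa [div_le_iff₀ hgx]
  calc a = liminf (fun x => a - K / g x) l := hlim.liminf_eq.symm
    _ ≤ liminf (fun x => f x / g x) l := by
      refine liminf_le_liminf ?_ hlim.isBoundedUnder_ge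
        (isCoboundedUnder_ge_of_eventually_le l hbdd)
      filter_upwards [hge, hpos] with x hx hgx
      rw [le_div_iff₀ hgx, sub_mul, div_mul_cancel₀ K hgx.ne']
      exact hx

theorem Filter.eventually_mul_le_of_lt_liminf_div {α : Type*} {l : Filter α} {f g : α → ℝ} {c : ℝ}
    (hf : ∀ᶠ x in l, 0 ≤ f x) (hg : ∀ᶠ x in l, 0 < g x)
    (hc : c < liminf (fun x => f x / g x) l) : ∀ᶠ x in l, c * g x ≤ f x := by
  have hbdd : IsBoundedUnder (· ≥ ·) l (fun x => f x / g x) :=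
    isBoundedUnder_of_eventually_ge (a := 0) <| by
      filter_upwards [hf, hg] with x hfx hgx using div_nonneg hfx hgx.le
  filter_upwards [eventually_lt_of_lt_liminf hc hbdd, hg] with x hx hgx
  exact ((lt_div_iff₀ hgx).mp hx).le

section

variable {μ : ℝ → ℝ}

theorem AntitoneOn.intervalIntegrable_of_Ici {c a b : ℝ} (hμ : AntitoneOn μ (Ici c))
    (ha : c ≤ a) (hb : c ≤ b) : IntervalIntegrable μ volume a b :=
  (hμ.mono fun _ hx => le_trans (le_inf ha hb) hx.1).intervalIntegrable

theorem AntitoneOn.comp_mul_left_Ici {l : ℝ} (hμ : AntitoneOn μ (Ici 0)) (hl : 0 ≤ l) :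
    AntitoneOn (fun t => μ (l * t)) (Ici 0) := fun _ hs _ ht hst =>
  hμ (mul_nonneg hl hs) (mul_nonneg hl ht) (mul_le_mul_of_nonneg_left hst hl)

theorem tendsto_integral_atTop_of_not_integrableOn_Ioi (hμ₀ : ∀ x ≥ 0, 0 ≤ μ x)
    (hμ : AntitoneOn μ (Ici 0)) (hnot : ¬ IntegrableOn μ (Ioi 0)) :
    Tendsto (fun x => ∫ y in (0:ℝ)..x, μ y) atTop atTop := by
  rw [tendsto_atTop_atTop]
  intro M
  by_contra! hM
  refine hnot (integrableOn_Ioi_of_intervalIntegral_norm_bounded M 0 (l := atTop)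
    (b := ((↑) : ℕ → ℝ)) (fun n => ?_) tendsto_natCast_atTop_atTop (Eventually.of_forall ?_))
  · exact (intervalIntegrable_iff_integrableOn_Ioc_of_le n.cast_nonneg).mp
      (hμ.intervalIntegrable_of_Ici le_rfl n.cast_nonneg)
  · intro n
    obtain ⟨x, hnx, hx⟩ := hM n
    have hx0 : 0 ≤ x := n.cast_nonneg.trans hnx
    calc ∫ y in (0:ℝ)..n, ‖μ y‖ = ∫ y in (0:ℝ)..n, μ y :=
          integral_congr fun y hy => Real.norm_of_nonneg <| hμ₀ y <| by
            simpa [n.cast_nonneg] using hy.1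
      _ ≤ ∫ y in (0:ℝ)..x, μ y :=
          integral_mono_interval le_rfl n.cast_nonneg hnx
            (ae_restrict_of_forall_mem measurableSet_Ioc fun y hy => hμ₀ y hy.1.le)
            (hμ.intervalIntegrable_of_Ici le_rfl hx0)
      _ ≤ M := hx.le

theorem integral_mul_le_mul_integral (hμ : AntitoneOn μ (Ici 0)) {l x : ℝ} (hl : 1 ≤ l)
    (hx : 0 ≤ x) : ∫ y in (0:ℝ)..l * x, μ y ≤ l * ∫ y in (0:ℝ)..x, μ y := by
  have hl0 : 0 ≤ l := zero_le_one.trans hl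
  calc ∫ y in (0:ℝ)..l * x, μ y = l * ∫ t in (0:ℝ)..x, μ (l * t) := by simp
    _ ≤ l * ∫ y in (0:ℝ)..x, μ y :=
        mul_le_mul_of_nonneg_left (integral_mono_on hx
          ((hμ.comp_mul_left_Ici hl0).intervalIntegrable_of_Ici le_rfl hx)
          (hμ.intervalIntegrable_of_Ici le_rfl hx) fun t ht =>
            hμ ht.1 (mul_nonneg hl0 ht.1) (le_mul_of_one_le_left ht.1 hl)) hl0

theorem mul_sub_integral_le_integral_mul (hμ₀ : ∀ x ≥ 0, 0 ≤ μ x) (hμ : AntitoneOn μ (Ici 0))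
    {l c T x : ℝ} (hl : 0 ≤ l) (hT : 0 ≤ T) (hTx : T ≤ x)
    (hc : ∀ t ∈ Icc T x, c * μ t ≤ μ (l * t)) :
    l * c * ((∫ y in (0:ℝ)..x, μ y) - ∫ y in (0:ℝ)..T, μ y) ≤ ∫ y in (0:ℝ)..l * x, μ y := by
  have hx : 0 ≤ x := hT.trans hTx
  have hlT : 0 ≤ l * T := mul_nonneg hl hT
  have hlx : 0 ≤ l * x := mul_nonneg hl hx
  calc l * c * ((∫ y in (0:ℝ)..x, μ y) - ∫ y in (0:ℝ)..T, μ y)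
      = l * ∫ t in T..x, c * μ t := by
        rw [integral_interval_sub_left (hμ.intervalIntegrable_of_Ici le_rfl hx)
          (hμ.intervalIntegrable_of_Ici le_rfl hT), intervalIntegral.integral_const_mul, mul_assoc]
    _ ≤ l * ∫ t in T..x, μ (l * t) :=
        mul_le_mul_of_nonneg_left (integral_mono_on hTx
          ((hμ.intervalIntegrable_of_Ici hT hx).const_mul c)
          ((hμ.comp_mul_left_Ici hl).intervalIntegrable_of_Ici hT hx) hc) hl
    _ = (∫ y in (0:ℝ)..l * x, μ y) - ∫ y in (0:ℝ)..l * T, μ y := by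
        rw [← smul_eq_mul, smul_integral_comp_mul_left, integral_interval_sub_left
          (hμ.intervalIntegrable_of_Ici le_rfl hlx) (hμ.intervalIntegrable_of_Ici le_rfl hlT)]
    _ ≤ ∫ y in (0:ℝ)..l * x, μ y :=
        sub_le_self _ (integral_nonneg hlT fun y hy => hμ₀ y hy.1)

end

theorem stmt_9_general (μ : ℝ → ℝ) (hpos : ∀ x ≥ 0, 0 < μ x)
    (hmono : AntitoneOn μ (Set.Ici 0))
    (hnotint : ¬ IntegrableOn μ (Set.Ici 0))
    (S : ℝ → ℝ) (hS : ∀ x, S x = ∫ y in (0:ℝ)..x, μ y)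
    (l : ℝ) (hl : 1 < l)
    (hlim : 1 < l * Filter.liminf (fun t => μ (l * t) / μ t) Filter.atTop) :
    l * Filter.liminf (fun x => μ (l * x) / μ x) Filter.atTop ≤
      Filter.liminf (fun x => S (l * x) / S x) Filter.atTop ∧
    1 < l * Filter.liminf (fun x => μ (l * x) / μ x) Filter.atTop := by
  obtain rfl : S = fun x => ∫ y in (0:ℝ)..x, μ y := funext hS
  refine ⟨?_, hlim⟩
  have hl0 : 0 < l := zero_lt_one.trans hl
  have hμ₀ : ∀ x ≥ 0, 0 ≤ μ x := fun x hx => (hpos x hx).le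
  have hS_top := tendsto_integral_atTop_of_not_integrableOn_Ioi hμ₀ hmono
    (by rwa [integrableOn_Ici_iff_integrableOn_Ioi] at hnotint)
  have hS_le : ∀ᶠ x in atTop, ∫ y in (0:ℝ)..l * x, μ y ≤ l * ∫ y in (0:ℝ)..x, μ y :=
    (eventually_ge_atTop 0).mono fun x hx => integral_mul_le_mul_integral hmono hl.le hx
  rw [← le_div_iff₀' hl0]
  refine le_of_forall_lt_imp_le_of_dense fun c hc => ?_
  obtain ⟨T, hT⟩ := (eventually_mul_le_of_lt_liminf_div
    ((eventually_ge_atTop 0).mono fun t ht => hμ₀ _ (mul_nonneg hl0.le ht))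
    ((eventually_ge_atTop 0).mono hpos) hc).exists_forall_of_atTop
  rw [le_div_iff₀' hl0]
  refine le_liminf_div_of_le_mul_sub (K := l * c * ∫ y in (0:ℝ)..max T 0, μ y) hS_top hS_le ?_
  filter_upwards [eventually_ge_atTop (max T 0)] with x hx
  have := mul_sub_integral_le_integral_mul hμ₀ hmono hl0.le (le_max_right T 0) hx
    fun t ht => hT t ((le_max_left T 0).trans ht.1)
  linarith

theorem stmt_9 (μ : ℝ → ℝ) (hpos : ∀ x ≥ 0, 0 < μ x)
    (hmono : AntitoneOn μ (Set.Ici 0))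
    (hrc : ∀ x ≥ (0:ℝ), ContinuousWithinAt μ (Set.Ici x) x)
    (hnotint : ¬ IntegrableOn μ (Set.Ici 0))
    (S : ℝ → ℝ) (hS : ∀ x, S x = ∫ y in (0:ℝ)..x, μ y)
    (l : ℝ) (hl : 1 < l)
    (hlim : 1 < l * Filter.liminf (fun t => μ (l * t) / μ t) Filter.atTop) :
    l * Filter.liminf (fun x => μ (l * x) / μ x) Filter.atTop ≤
      Filter.liminf (fun x => S (l * x) / S x) Filter.atTop ∧
    1 < l * Filter.liminf (fun x => μ (l * x) / μ x) Filter.atTop :=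
  stmt_9_general μ hpos hmono hnotint S hS l hl hlim
end

section
/- Let μ : [0,∞) → (0,∞) be non-increasing, not integrable, S(x) = ∫₀ˣ μ, and suppose x·μ(x)/S(x) ≥ k > 0 for all x > 0. Then for all λ ≥ 1 and x > 0, μ(x)/μ(λx) ≤ λ^{1−k}/k. -/
/-!
Write `S(t) = ∫₀ᵗ μ`. The hypothesis `k S(t) ≤ t μ(t)` says that the right derivative of
`t ↦ S(t) t^{-k}` is nonnegative, so `S(λx) ≥ λ^k S(x)`. Combined with `x μ(x) ≤ S(x)` (monotonicity
of `μ`) and `k S(λx) ≤ λx μ(λx)` this gives `μ(λx) ≥ k λ^{k-1} μ(x)`.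
-/

open MeasureTheory Set Topology

theorem AntitoneOn.sub_mul_le_intervalIntegral {f : ℝ → ℝ} {a b : ℝ} (hab : a ≤ b)
    (hf : AntitoneOn f (Icc a b)) : (b - a) * f b ≤ ∫ y in a..b, f y := by
  calc (b - a) * f b = ∫ _ in a..b, f b := by
        rw [intervalIntegral.integral_const, smul_eq_mul]
    _ ≤ ∫ y in a..b, f y :=
        intervalIntegral.integral_mono_on hab intervalIntegrable_const
          (hf.mono (uIcc_of_le hab).subset).intervalIntegrable
          fun y hy => hf hy (right_mem_Icc.2 hab) hy.2

theorem AntitoneOn.continuousOn_integral {f : ℝ → ℝ} {a b : ℝ} (hab : a ≤ b)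
    (hf : AntitoneOn f (Icc a b)) : ContinuousOn (fun u => ∫ y in a..u, f y) (Icc a b) := by
  simpa only [uIcc_of_le hab] using intervalIntegral.continuousOn_primitive_interval'
    (hf.mono (uIcc_of_le hab).subset).intervalIntegrable left_mem_uIcc

theorem AntitoneOn.hasDerivWithinAt_integral_Ici {f : ℝ → ℝ} {a t : ℝ}
    (hf : AntitoneOn f (Ici a)) (ht : a ≤ t) (hft : ContinuousWithinAt f (Ici t) t) :
    HasDerivWithinAt (fun u => ∫ y in a..u, f y) (f t) (Ici t) t := by
  have hmeas : StronglyMeasurableAtFilter f (𝓝[>] t) volume :=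
    ⟨Ioc t (t + 1), Ioc_mem_nhdsGT_of_mem ⟨le_rfl, lt_add_one t⟩,
      (aemeasurable_restrict_of_antitoneOn measurableSet_Ioc (hf.mono fun y hy =>
        ht.trans hy.1.le)).aestronglyMeasurable⟩
  exact intervalIntegral.integral_hasDerivWithinAt_right
    (hf.mono fun y hy => by rw [uIcc_of_le ht] at hy; exact hy.1).intervalIntegrable
    hmeas (hft.mono Ioi_subset_Ici_self)

theorem rpow_div_mul_le_of_le_mul_deriv_right {f f' : ℝ → ℝ} {a b k : ℝ} (ha : 0 < a)
    (hab : a ≤ b) (hf : ContinuousOn f (Icc a b))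
    (hf' : ∀ t ∈ Ico a b, HasDerivWithinAt f (f' t) (Ici t) t)
    (hbound : ∀ t ∈ Ico a b, k * f t ≤ t * f' t) : (b / a) ^ k * f a ≤ f b := by
  have hpos : ∀ t ∈ Icc a b, 0 < t := fun t ht => ha.trans_le ht.1
  have hG : f a * a ^ (-k) ≤ f b * b ^ (-k) := by
    refine image_le_of_deriv_right_le_deriv_boundary (f := fun _ => f a * a ^ (-k))
      (f' := fun _ => 0) (B := fun t => f t * t ^ (-k))
      (B' := fun t => f' t * t ^ (-k) + f t * (-k * t ^ (-k - 1))) continuousOn_const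
      (fun t _ => hasDerivWithinAt_const t _ _) le_rfl
      (hf.mul fun t ht => (Real.continuousAt_rpow_const t (-k)
        (Or.inl (hpos t ht).ne')).continuousWithinAt)
      (fun t ht => (hf' t ht).mul (Real.hasDerivAt_rpow_const
        (Or.inl (hpos t (Ico_subset_Icc_self ht)).ne')).hasDerivWithinAt)
      (fun t ht => ?_) (right_mem_Icc.2 hab)
    have htpos := hpos t (Ico_subset_Icc_self ht)
    have hsplit : t ^ (-k) = t * t ^ (-k - 1) := by
      conv_lhs => rw [show -k = 1 + (-k - 1) by ring, Real.rpow_add htpos, Real.rpow_one]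
    have := mul_nonneg (sub_nonneg.2 (hbound t ht)) (Real.rpow_pos_of_pos htpos (-k - 1)).le
    rw [hsplit]
    linarith
  have hbk : 0 < b ^ k := Real.rpow_pos_of_pos (ha.trans_le hab) k
  rw [Real.rpow_neg ha.le, Real.rpow_neg (ha.le.trans hab), ← div_eq_mul_inv,
    ← div_eq_mul_inv, div_le_div_iff₀ (Real.rpow_pos_of_pos ha k) hbk] at hG
  rw [Real.div_rpow (ha.le.trans hab) ha.le, div_mul_eq_mul_div, div_le_iff₀
    (Real.rpow_pos_of_pos ha k)]
  linarith

theorem stmt_11_general (μ : ℝ → ℝ) (hpos : ∀ x ≥ 0, 0 < μ x)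
    (hmono : AntitoneOn μ (Set.Ici 0))
    (hrc : ∀ x ≥ (0:ℝ), ContinuousWithinAt μ (Set.Ici x) x)
    (S : ℝ → ℝ) (hS : ∀ x, S x = ∫ y in (0:ℝ)..x, μ y)
    (k : ℝ) (hk : 0 < k) (hbound : ∀ x > 0, k ≤ x * μ x / S x) :
    ∀ l ≥ (1:ℝ), ∀ x > 0, μ x / μ (l * x) ≤ l ^ (1 - k) / k := by
  intro l hl x hx
  have hl0 : 0 < l := one_pos.trans_le hl
  have hlx : 0 < l * x := mul_pos hl0 hx
  have hxμ : ∀ t ≥ 0, t * μ t ≤ S t := fun t ht => by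
    simpa [hS] using (hmono.mono Icc_subset_Ici_self).sub_mul_le_intervalIntegral ht
  have hSpos : ∀ t > 0, 0 < S t := fun t ht =>
    (mul_pos ht (hpos t ht.le)).trans_le (hxμ t ht.le)
  have hkS : ∀ t > 0, k * S t ≤ t * μ t := fun t ht =>
    (le_div_iff₀ (hSpos t ht)).1 (hbound t ht)
  have hS_cont : ContinuousOn S (Icc x (l * x)) :=
    (((hmono.mono Icc_subset_Ici_self).continuousOn_integral hlx.le).mono
      (Icc_subset_Icc hx.le le_rfl)).congr fun t _ => hS t
  have hgrowth : l ^ k * S x ≤ S (l * x) := by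
    have h := rpow_div_mul_le_of_le_mul_deriv_right hx (le_mul_of_one_le_left hx.le hl)
      hS_cont (fun t ht => ((hmono.hasDerivWithinAt_integral_Ici (hx.le.trans ht.1)
        (hrc t (hx.le.trans ht.1))).congr (fun u _ => hS u) (hS t)))
      (fun t ht => hkS t (hx.trans_le ht.1))
    rwa [mul_div_cancel_right₀ _ hx.ne'] at h
  have hcompare : x * (k * l ^ k * μ x) ≤ x * (l * μ (l * x)) := calc
    x * (k * l ^ k * μ x) = k * l ^ k * (x * μ x) := by ring
    _ ≤ k * (l ^ k * S x) := by rw [mul_assoc]; gcongr; exact hxμ x hx.le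
    _ ≤ k * S (l * x) := by gcongr
    _ ≤ l * x * μ (l * x) := hkS _ hlx
    _ = x * (l * μ (l * x)) := by ring
  rw [div_le_div_iff₀ (hpos _ hlx.le) hk, Real.rpow_sub hl0, Real.rpow_one, div_mul_eq_mul_div,
    le_div_iff₀ (Real.rpow_pos_of_pos hl0 k)]
  linarith [le_of_mul_le_mul_left hcompare hx]

theorem stmt_11 (μ : ℝ → ℝ) (hpos : ∀ x ≥ 0, 0 < μ x)
    (hmono : AntitoneOn μ (Set.Ici 0))
    (hrc : ∀ x ≥ (0:ℝ), ContinuousWithinAt μ (Set.Ici x) x)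
    (hnotint : ¬ IntegrableOn μ (Set.Ici 0))
    (S : ℝ → ℝ) (hS : ∀ x, S x = ∫ y in (0:ℝ)..x, μ y)
    (k : ℝ) (hk : 0 < k) (hbound : ∀ x > 0, k ≤ x * μ x / S x) :
    ∀ l ≥ (1:ℝ), ∀ x > 0, μ x / μ (l * x) ≤ l ^ (1 - k) / k :=
  stmt_11_general μ hpos hmono hrc S hS k hk hbound
end

section
/- Let G be the set of non-decreasing, right continuous functions g : ℝ → (−∞,∞] that are bounded below and unbounded above, and let M be the set of non-increasing, right continuous, infinitesimal (tending to 0 at ∞) functions μ : [0,∞) → [0,∞). Then the map μ ↦ g, where g(t) = −log μ(eᵗ), is an order-reversing bijection from M onto G (restricted to appropriate domains, with the convention −log 0 = ∞). -/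
/-!
For `μ ≥ 0` we have `toG μ = negLog ∘ μ ∘ exp`, where `negLog x = -log x` (read through
`ENNReal.log`, so `negLog 0 = ⊤`) is a continuous order anti-isomorphism from `[0, ∞)` onto
`(-∞, ∞]` with inverse `expNeg y = e^{-y}`. Monotonicity, right continuity and the behaviour at
`∞` therefore pass between `μ` and `g`. The only asymmetry is the point `0`, which is not of the
form `eᵗ`: there `μ` is pinned down by right continuity, which gives injectivity and forces the
preimage of `g` to be `x ↦ e^{-g(log x)}` on `(0, ∞)` with value `sup_t e^{-g(t)}` at `0`.
-/
open Filter

/-- The set `M` of non-increasing, right continuous, nonnegative functions on `[0,∞)`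
tending to `0` at infinity. -/
def Mset : Set (NNReal → ℝ) :=
  {μ | Antitone μ ∧ (∀ x, 0 ≤ μ x) ∧ (∀ x, ContinuousWithinAt μ (Set.Ici x) x) ∧
    Filter.Tendsto μ Filter.atTop (nhds 0)}

/-- The set `G` of non-decreasing, right continuous, `(-∞,∞]`-valued functions on `ℝ`,
bounded from below and unbounded from above. -/
def Gset : Set (ℝ → EReal) :=
  {g | Monotone g ∧ (∀ t, ContinuousWithinAt g (Set.Ici t) t) ∧
    (∃ b : ℝ, ∀ t, (b : EReal) ≤ g t) ∧ (∀ b : ℝ, ∃ t, (b : EReal) < g t)}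

/-- The map `μ ↦ g`, `g(t) = -log μ(eᵗ)`, with the convention `-log 0 = ∞`. -/
noncomputable def toG (μ : NNReal → ℝ) : ℝ → EReal := fun t =>
  if μ (Real.toNNReal (Real.exp t)) = 0 then ⊤
  else ((-Real.log (μ (Real.toNNReal (Real.exp t))) : ℝ) : EReal)

open Set Topology

noncomputable def nnexp (t : ℝ) : NNReal := Real.toNNReal (Real.exp t)

lemma nnexp_ne_zero (t : ℝ) : nnexp t ≠ 0 := (Real.toNNReal_pos.mpr (Real.exp_pos t)).ne'

lemma monotone_nnexp : Monotone nnexp := fun _ _ h => Real.toNNReal_mono (Real.exp_le_exp.mpr h)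

lemma continuous_nnexp : Continuous nnexp := continuous_real_toNNReal.comp Real.continuous_exp

lemma tendsto_nnexp_atTop : Tendsto nnexp atTop atTop :=
  tendsto_real_toNNReal_atTop.comp Real.tendsto_exp_atTop

lemma log_nnexp (t : ℝ) : Real.log (nnexp t) = t := by
  rw [nnexp, Real.coe_toNNReal _ (Real.exp_nonneg t), Real.log_exp]

lemma nnexp_log {x : NNReal} (hx : x ≠ 0) : nnexp (Real.log x) = x :=
  NNReal.coe_injective <| by
    rw [nnexp, Real.coe_toNNReal _ (Real.exp_nonneg _),
      Real.exp_log (NNReal.coe_pos.mpr hx.bot_lt)]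

noncomputable def negLog (x : ℝ) : EReal := -ENNReal.log (ENNReal.ofReal x)

noncomputable def expNeg (y : EReal) : ℝ := (EReal.exp (-y)).toReal

@[simp] lemma negLog_zero : negLog 0 = ⊤ := by simp [negLog]

lemma negLog_ne_bot (x : ℝ) : negLog x ≠ ⊥ := by
  rw [negLog, Ne, EReal.neg_eq_bot_iff, ENNReal.log_eq_top_iff]
  exact ENNReal.ofReal_ne_top

lemma antitone_negLog : Antitone negLog := fun _ _ h =>
  EReal.neg_le_neg_iff.mpr (ENNReal.log_monotone (ENNReal.ofReal_le_ofReal h))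

lemma negLog_le_negLog_iff {x y : ℝ} (hx : 0 ≤ x) : negLog x ≤ negLog y ↔ y ≤ x := by
  rw [negLog, negLog, EReal.neg_le_neg_iff, ENNReal.log_le_log_iff,
    ENNReal.ofReal_le_ofReal_iff hx]

lemma continuous_negLog : Continuous negLog :=
  continuous_neg.comp (ENNReal.continuous_log.comp ENNReal.continuous_ofReal)

lemma negLog_expNeg {y : EReal} (hy : y ≠ ⊥) : negLog (expNeg y) = y := by
  have : EReal.exp (-y) ≠ ⊤ := by simpa [EReal.exp_eq_top_iff, EReal.neg_eq_top_iff]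
  rw [negLog, expNeg, ENNReal.ofReal_toReal this, EReal.log_exp, neg_neg]

lemma expNeg_nonneg (y : EReal) : 0 ≤ expNeg y := ENNReal.toReal_nonneg

@[simp] lemma expNeg_top : expNeg ⊤ = 0 := by simp [expNeg]

lemma expNeg_le_expNeg {x y : EReal} (hx : x ≠ ⊥) (hxy : x ≤ y) : expNeg y ≤ expNeg x :=
  ENNReal.toReal_mono (by simpa [EReal.exp_eq_top_iff, EReal.neg_eq_top_iff])
    (EReal.exp_monotone (EReal.neg_le_neg_iff.mpr hxy))

lemma continuousAt_expNeg {y : EReal} (hy : y ≠ ⊥) : ContinuousAt expNeg y :=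
  (ENNReal.tendsto_toReal (by simpa [EReal.exp_eq_top_iff, EReal.neg_eq_top_iff])).comp
    (ENNReal.continuous_exp.comp continuous_neg).continuousAt

lemma toG_eq_negLog {μ : NNReal → ℝ} (hμ : ∀ x, 0 ≤ μ x) :
    toG μ = fun t => negLog (μ (nnexp t)) := by
  funext t
  rw [toG, ← nnexp]
  split_ifs with h
  · simp [h]
  · rw [negLog, ENNReal.log_ofReal_of_pos ((hμ _).lt_of_ne' h), EReal.coe_neg]

lemma toG_mem_Gset {μ : NNReal → ℝ} (hμ : μ ∈ Mset) : toG μ ∈ Gset := by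
  obtain ⟨hanti, hnonneg, hrc, hlim⟩ := hμ
  rw [toG_eq_negLog hnonneg]
  refine ⟨fun s t h => antitone_negLog (hanti (monotone_nnexp h)), fun t => ?_,
    ⟨(negLog (μ 0)).toReal, fun t => ?_⟩, fun b => ?_⟩
  · exact continuous_negLog.continuousAt.comp_continuousWithinAt <|
      (hrc _).comp continuous_nnexp.continuousWithinAt fun s hs => monotone_nnexp hs
  · exact (EReal.coe_toReal_le (negLog_ne_bot _)).trans (antitone_negLog (hanti bot_le))
  · have : Tendsto (fun t => negLog (μ (nnexp t))) atTop (𝓝 ⊤) :=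
      negLog_zero ▸ (continuous_negLog.tendsto 0).comp (hlim.comp tendsto_nnexp_atTop)
    exact (EReal.tendsto_nhds_top_iff_real.mp this b).exists

lemma toG_le_toG_iff {μ₁ μ₂ : NNReal → ℝ} (h₁ : μ₁ ∈ Mset) (h₂ : μ₂ ∈ Mset) :
    toG μ₂ ≤ toG μ₁ ↔ μ₁ ≤ μ₂ := by
  rw [toG_eq_negLog h₁.2.1, toG_eq_negLog h₂.2.1, Pi.le_def]
  simp only [negLog_le_negLog_iff (h₂.2.1 _)]
  refine ⟨fun h x => ?_, fun h t => h _⟩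
  -- every point of `(x, ∞)` is some `nnexp t`, and right continuity carries the inequality to `x`
  refine ContinuousWithinAt.closure_le (s := Ioi x) (by simp [closure_Ioi])
    ((h₁.2.2.1 x).mono Ioi_subset_Ici_self) ((h₂.2.2.1 x).mono Ioi_subset_Ici_self)
    fun y hy => ?_
  simpa [nnexp_log (ne_bot_of_gt hy)] using h (Real.log y)

noncomputable def extendLog (h : ℝ → ℝ) (x : NNReal) : ℝ :=
  if x = 0 then ⨆ t, h t else h (Real.log x)

section extendLog

variable {h : ℝ → ℝ}

lemma extendLog_of_ne_zero {x : NNReal} (hx : x ≠ 0) : extendLog h x = h (Real.log x) :=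
  if_neg hx

lemma extendLog_nnexp (t : ℝ) : extendLog h (nnexp t) = h t := by
  rw [extendLog_of_ne_zero (nnexp_ne_zero t), log_nnexp]

lemma antitone_extendLog (hanti : Antitone h) (hbdd : BddAbove (range h)) :
    Antitone (extendLog h) := by
  intro x y hxy
  by_cases hy : y = 0
  · subst hy
    rw [nonpos_iff_eq_zero.mp hxy]
  rw [extendLog_of_ne_zero hy]
  by_cases hx : x = 0
  · rw [hx, extendLog, if_pos rfl]
    exact le_ciSup hbdd _
  · rw [extendLog_of_ne_zero hx]
    exact hanti (Real.log_le_log (NNReal.coe_pos.mpr (pos_iff_ne_zero.mpr hx)) hxy)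

lemma extendLog_nonneg (hnonneg : ∀ t, 0 ≤ h t) (hbdd : BddAbove (range h)) (x : NNReal) :
    0 ≤ extendLog h x := by
  unfold extendLog
  split_ifs
  · exact (hnonneg 0).trans (le_ciSup hbdd 0)
  · exact hnonneg _

lemma continuousWithinAt_extendLog (hanti : Antitone h) (hbdd : BddAbove (range h))
    (hrc : ∀ t, ContinuousWithinAt h (Ici t) t) (x : NNReal) :
    ContinuousWithinAt (extendLog h) (Ici x) x := by
  have hcoe : Tendsto ((↑) : NNReal → ℝ) (𝓝[>] x) (𝓝[>] x) :=
    NNReal.continuous_coe.continuousWithinAt.tendsto_nhdsWithin fun _ hy =>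
      NNReal.coe_lt_coe.mpr hy
  have key : Tendsto (fun y : NNReal => h (Real.log y)) (𝓝[>] x) (𝓝 (extendLog h x)) := by
    by_cases hx : x = 0
    · subst hx
      rw [extendLog, if_pos rfl]
      exact (tendsto_atBot_ciSup hanti hbdd).comp
        (Real.tendsto_log_nhdsGT_zero.comp (by simpa using hcoe))
    · have hxpos : (0 : ℝ) < x := NNReal.coe_pos.mpr (pos_iff_ne_zero.mpr hx)
      have hlog : Tendsto Real.log (𝓝[>] (x : ℝ)) (𝓝[>] (Real.log x)) :=
        (Real.continuousAt_log hxpos.ne').continuousWithinAt.tendsto_nhdsWithin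
          fun _ hy => Real.log_lt_log hxpos hy
      rw [extendLog_of_ne_zero hx]
      exact (continuousWithinAt_Ioi_iff_Ici.mpr (hrc _)).tendsto.comp (hlog.comp hcoe)
  rw [← continuousWithinAt_Ioi_iff_Ici, ContinuousWithinAt]
  refine key.congr' ?_
  filter_upwards [self_mem_nhdsWithin] with y hy
  exact (extendLog_of_ne_zero (ne_bot_of_gt hy)).symm

lemma tendsto_extendLog_atTop {l : Filter ℝ} (hlim : Tendsto h atTop l) :
    Tendsto (extendLog h) atTop l := by
  have hlog : Tendsto (fun x : NNReal => Real.log x) atTop atTop :=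
    Real.tendsto_log_atTop.comp (NNReal.tendsto_coe_atTop.mpr tendsto_id)
  refine (hlim.comp hlog).congr' ?_
  filter_upwards [eventually_ne_atTop 0] with x hx
  exact (extendLog_of_ne_zero hx).symm

lemma extendLog_mem_Mset (hanti : Antitone h) (hnonneg : ∀ t, 0 ≤ h t)
    (hbdd : BddAbove (range h)) (hrc : ∀ t, ContinuousWithinAt h (Ici t) t)
    (hlim : Tendsto h atTop (𝓝 0)) : extendLog h ∈ Mset :=
  ⟨antitone_extendLog hanti hbdd, extendLog_nonneg hnonneg hbdd,
    continuousWithinAt_extendLog hanti hbdd hrc, tendsto_extendLog_atTop hlim⟩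

end extendLog

lemma ne_bot_of_mem_Gset {g : ℝ → EReal} (hg : g ∈ Gset) (t : ℝ) : g t ≠ ⊥ := by
  obtain ⟨b, hb⟩ := hg.2.2.1
  exact ne_bot_of_le_ne_bot (EReal.coe_ne_bot b) (hb t)

lemma tendsto_atTop_of_mem_Gset {g : ℝ → EReal} (hg : g ∈ Gset) : Tendsto g atTop (𝓝 ⊤) :=
  EReal.tendsto_nhds_top_iff_real.mpr fun b =>
    let ⟨t, ht⟩ := hg.2.2.2 b
    eventually_atTop.mpr ⟨t, fun _ hs => ht.trans_le (hg.1 hs)⟩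

lemma extendLog_expNeg_mem_Mset {g : ℝ → EReal} (hg : g ∈ Gset) :
    extendLog (fun t => expNeg (g t)) ∈ Mset := by
  have hbot := ne_bot_of_mem_Gset hg
  have hlim := tendsto_atTop_of_mem_Gset hg
  obtain ⟨hmono, hrc, ⟨b, hb⟩, -⟩ := hg
  refine extendLog_mem_Mset (fun _ _ hst => expNeg_le_expNeg (hbot _) (hmono hst))
    (fun t => expNeg_nonneg _) ⟨expNeg b, ?_⟩
    (fun t => (continuousAt_expNeg (hbot t)).comp_continuousWithinAt (hrc t)) ?_
  · rintro _ ⟨t, rfl⟩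
    exact expNeg_le_expNeg (EReal.coe_ne_bot b) (hb t)
  · simpa [Function.comp_def] using (continuousAt_expNeg top_ne_bot).tendsto.comp hlim

lemma toG_extendLog_expNeg {g : ℝ → EReal} (hg : g ∈ Gset) :
    toG (extendLog fun t => expNeg (g t)) = g := by
  rw [toG_eq_negLog (extendLog_expNeg_mem_Mset hg).2.1]
  funext t
  rw [extendLog_nnexp, negLog_expNeg (ne_bot_of_mem_Gset hg t)]

theorem stmt_15 :
    Set.BijOn toG Mset Gset ∧
    ∀ μ₁ ∈ Mset, ∀ μ₂ ∈ Mset, (μ₁ ≤ μ₂ ↔ toG μ₂ ≤ toG μ₁) := by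
  have order : ∀ μ₁ ∈ Mset, ∀ μ₂ ∈ Mset, (μ₁ ≤ μ₂ ↔ toG μ₂ ≤ toG μ₁) :=
    fun _ h₁ _ h₂ => (toG_le_toG_iff h₁ h₂).symm
  refine ⟨⟨fun _ => toG_mem_Gset, fun μ₁ h₁ μ₂ h₂ h => ?_, fun g hg => ?_⟩, order⟩
  · exact le_antisymm ((order μ₁ h₁ μ₂ h₂).mpr h.ge) ((order μ₂ h₂ μ₁ h₁).mpr h.le)
  · exact ⟨_, extendLog_expNeg_mem_Mset hg, toG_extendLog_expNeg hg⟩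
end

section
/- Let g_A : ℝ → ℝ be non-decreasing and unbounded above. Then there exists an increasing sequence (tₙ) with t_{n+1} − tₙ > n and (1/2)g_A(t_{n+1}) − (1/2)g_A(tₙ) > n, and the step function g defined by g(t) = (1/2)g_A(tₙ) for t ∈ [tₙ, t_{n+1}) satisfies: g is non-decreasing, g ≤ (1/2)g_A, liminf_{t→∞}(g(t+h)−g(t))/h = 0 for every h > 0 and limsup_{t→∞}(g(t+h)−g(t))/h = ∞ for some h, i.e., the lower Matuszewska index of g is 0 and the upper is ∞. -/
open Filter

theorem stmt_17 (gA : ℝ → ℝ) (hmono : Monotone gA)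
    (hunbdd : ¬ BddAbove (Set.range gA)) :
    ∃ t : ℕ → ℝ, StrictMono t ∧
      (∀ n : ℕ, (n : ℝ) < t (n + 1) - t n) ∧
      (∀ n : ℕ, (n : ℝ) < (1/2) * gA (t (n + 1)) - (1/2) * gA (t n)) ∧
      ∃ g : ℝ → ℝ,
        (∀ n : ℕ, ∀ s ∈ Set.Ico (t n) (t (n + 1)), g s = (1/2) * gA (t n)) ∧
        (∀ s < t 0, g s = (1/2) * gA (t 0)) ∧
        Monotone g ∧
        (∀ s ≥ t 0, g s ≤ (1/2) * gA s) ∧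
        (∀ h > (0:ℝ),
          Filter.liminf (fun s : ℝ => (((g (s + h) - g s) / h : ℝ) : EReal)) Filter.atTop = 0) ∧
        (∃ h > (0:ℝ),
          Filter.limsup (fun s : ℝ => (((g (s + h) - g s) / h : ℝ) : EReal)) Filter.atTop = ⊤) := by
  have key : ∀ L M : ℝ, ∃ x, L < x ∧ M < gA x := by
    intro L M
    have hx0 : ∃ x, M < gA x := by
      by_contra hc
      push_neg at hc
      exact hunbdd ⟨M, by rintro y ⟨x, rfl⟩; exact hc x⟩
    obtain ⟨x0, hx0⟩ := hx0
    refine ⟨max x0 (L + 1), ?_, lt_of_lt_of_le hx0 (hmono (le_max_left _ _))⟩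
    have := le_max_right x0 (L + 1); linarith
  let t : ℕ → ℝ := fun n =>
    Nat.rec (0 : ℝ) (fun n prev => (key (prev + n) (gA prev + 2 * n)).choose) n
  have ht1 : ∀ n : ℕ, t n + n < t (n + 1) := fun n =>
    (key (t n + n) (gA (t n) + 2 * n)).choose_spec.1
  have ht2 : ∀ n : ℕ, gA (t n) + 2 * n < gA (t (n + 1)) := fun n =>
    (key (t n + n) (gA (t n) + 2 * n)).choose_spec.2
  have htmono : StrictMono t := strictMono_nat_of_lt_succ (fun n => by
    have h1 := ht1 n
    have h2 : (0 : ℝ) ≤ n := n.cast_nonneg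
    linarith)
  have hC : ∀ n : ℕ, t 0 + n ≤ t (n + 1) := by
    intro n
    induction n with
    | zero => simpa using (htmono (Nat.lt_succ_self 0)).le
    | succ n ih =>
      have h1 := ht1 (n + 1)
      push_cast at h1 ih ⊢
      have h2 : (0 : ℝ) ≤ n := n.cast_nonneg
      linarith
  have hex : ∀ s : ℝ, ∃ n : ℕ, s < t (n + 1) := by
    intro s
    obtain ⟨n, hn⟩ := exists_nat_gt (s - t 0)
    exact ⟨n, by have := hC n; linarith⟩
  let m : ℝ → ℕ := fun s => Nat.find (hex s)
  let g : ℝ → ℝ := fun s => (1/2) * gA (t (m s))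
  have hm_eq : ∀ (n : ℕ) (s : ℝ), t n ≤ s → s < t (n + 1) → m s = n := by
    intro n s h1 h2
    refine (Nat.find_eq_iff (hex s)).2 ⟨h2, fun k hk => ?_⟩
    push_neg
    exact le_trans (htmono.monotone (by omega : k + 1 ≤ n)) h1
  have hm_mono : Monotone m := by
    intro a b hab
    exact Nat.find_le (lt_of_le_of_lt hab (Nat.find_spec (hex b)))
  have hg_mono : Monotone g := fun a b hab =>
    mul_le_mul_of_nonneg_left (hmono (htmono.monotone (hm_mono hab))) (by norm_num)
  have hts : ∀ s : ℝ, t 0 ≤ s → t (m s) ≤ s := by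
    intro s hs
    rcases Nat.eq_zero_or_pos (m s) with h0 | hpos
    · show t (m s) ≤ s
      rw [h0]; exact hs
    · have hmin := Nat.find_min (hex s) (Nat.sub_lt hpos Nat.one_pos)
      push_neg at hmin
      have he : m s - 1 + 1 = m s := Nat.succ_pred_eq_of_pos hpos
      rwa [he] at hmin
  refine ⟨t, htmono, fun n => by have := ht1 n; linarith,
    fun n => by have := ht2 n; linarith, g, ?_, ?_, hg_mono, ?_, ?_, ?_⟩
  · intro n s hs
    show (1/2) * gA (t (m s)) = (1/2) * gA (t n)
    rw [hm_eq n s hs.1 hs.2]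
  · intro s hs
    have h0 : m s = 0 := (Nat.find_eq_zero (hex s)).2 (hs.trans (htmono Nat.zero_lt_one))
    show (1/2) * gA (t (m s)) = (1/2) * gA (t 0)
    rw [h0]
  · intro s hs
    exact mul_le_mul_of_nonneg_left (hmono (hts s hs)) (by norm_num)
  · intro h hh
    have hfreq : ∃ᶠ s in atTop, ((((g (s + h) - g s) / h : ℝ)) : EReal) ≤ 0 := by
      rw [frequently_atTop]
      intro S
      obtain ⟨n, hn1, hn2⟩ : ∃ n : ℕ, h < (n : ℝ) ∧ S ≤ t n := by
        obtain ⟨n, hn⟩ := exists_nat_gt (max h (S - t 0))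
        have hl := le_max_left h (S - t 0)
        have hr := le_max_right h (S - t 0)
        have hc := hC n
        exact ⟨n + 1, by push_cast; linarith, by linarith⟩
      refine ⟨t n, hn2, ?_⟩
      have hn0 : (0 : ℝ) ≤ n := n.cast_nonneg
      have h1 := ht1 n
      have hms : m (t n) = n := hm_eq n (t n) le_rfl (by linarith)
      have hmsh : m (t n + h) = n := hm_eq n _ (by linarith) (by linarith)
      have hz : g (t n + h) - g (t n) = 0 := by
        show (1/2) * gA (t (m (t n + h))) - (1/2) * gA (t (m (t n))) = 0
        rw [hms, hmsh]; ring
      rw [hz]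
      simp
    have hnonneg : ∀ s : ℝ, (0 : EReal) ≤ (((g (s + h) - g s) / h : ℝ) : EReal) := by
      intro s
      have : (0 : ℝ) ≤ (g (s + h) - g s) / h :=
        div_nonneg (sub_nonneg.2 (hg_mono (by linarith))) hh.le
      exact_mod_cast this
    exact le_antisymm (Filter.liminf_le_of_frequently_le' hfreq)
      (Filter.le_liminf_of_le (by isBoundedDefault) (Eventually.of_forall hnonneg))
  · refine ⟨1, one_pos, ?_⟩
    have Hfreq : ∀ r : ℝ, ∃ᶠ s in atTop,
        (r : EReal) ≤ (((g (s + 1) - g s) / 1 : ℝ) : EReal) := by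
      intro r
      rw [frequently_atTop]
      intro S
      obtain ⟨n, hn1, hn2, hn3⟩ : ∃ n : ℕ, 1 ≤ (n : ℝ) ∧ r ≤ (n : ℝ) ∧ S ≤ t n := by
        obtain ⟨n, hn⟩ := exists_nat_gt (max r (max 1 (S - t 0)))
        have hl := le_max_left r (max 1 (S - t 0))
        have hr1 := (le_max_left 1 (S - t 0)).trans (le_max_right r _)
        have hr2 := (le_max_right 1 (S - t 0)).trans (le_max_right r _)
        have hc := hC n
        exact ⟨n + 1, by push_cast; linarith, by push_cast; linarith,
          by linarith⟩
      have h1 := ht1 n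
      have h1' := ht1 (n + 1)
      have hn0 : (0 : ℝ) ≤ n := n.cast_nonneg
      push_cast at h1'
      refine ⟨t (n + 1) - 1, by linarith, ?_⟩
      have hms : m (t (n + 1) - 1) = n := hm_eq n _ (by linarith) (by linarith)
      have hms1 : m (t (n + 1) - 1 + 1) = n + 1 := by
        have e : t (n + 1) - 1 + 1 = t (n + 1) := by ring
        rw [e]
        exact hm_eq (n + 1) _ le_rfl (by linarith)
      have hval : r ≤ (g (t (n + 1) - 1 + 1) - g (t (n + 1) - 1)) / 1 := by
        show r ≤ ((1/2) * gA (t (m (t (n + 1) - 1 + 1))) -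
          (1/2) * gA (t (m (t (n + 1) - 1)))) / 1
        rw [hms, hms1, div_one]
        have := ht2 n
        linarith
      exact_mod_cast hval
    rw [EReal.eq_top_iff_forall_lt]
    intro y
    have := Filter.le_limsup_of_frequently_le' (Hfreq (y + 1))
    refine lt_of_lt_of_le ?_ this
    exact_mod_cast (by linarith : y < y + 1)
end
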